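/- In a complete binary tree T_C, every vertex of the left boundary of the right subtree of any vertex v is a successive leaf of every vertex of the right boundary of the left subtree of v; that is, B_r(left-subtree(v)) × B_l(right-subtree(v)) ⊆ S(T_C) for every internal vertex v of T_C. -/

import Mathlib

/-- Full binary trees: every vertex has 0 or 2 children. -/
inductive FBT where
  | leaf : FBT
  | node : FBT → FBT → FBT
deriving DecidableEq

namespace FBT

/-- Depth of a full binary tree. -/
def depth : FBT → ℕ
  | leaf => 0
  | node a b => max a.depth b.depth + 1

/-- Positions (reversed root-paths: head is the edge nearest the vertex) of the
leaves of `T`, in left-to-right order. -/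
def leaves : FBT → List (List Bool)
  | leaf => [[]]
  | node a b => a.leaves.map (· ++ [false]) ++ b.leaves.map (· ++ [true])

/-- Total number of vertices. -/
def numNodes : FBT → ℕ
  | leaf => 1
  | node a b => a.numNodes + b.numNodes + 1

/-- Number of internal (non-leaf) vertices. -/
def internals : FBT → ℕ
  | leaf => 0
  | node a b => a.internals + b.internals + 1

/-- The recursive probability function π of the stick-breaking prior:
`pi l T pos` where `pos` is the (reversed) position of the root of `T`. -/
def pi (l : List Bool → ℝ) : FBT → List Bool → ℝ
  | leaf, pos => l pos
  | node a b, pos => (1 - l pos) * pi l a (false :: pos) * pi l b (true :: pos)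

/-- Probability of an internal tree: `p(T) = π(root)`. -/
def pTree (l : List Bool → ℝ) (T : FBT) : ℝ := pi l T []

/-- The memoized value m̃, with `m̃(parent(root)) = 1`. -/
noncomputable def mt (l : List Bool → ℝ) : List Bool → ℝ
  | [] => 1 - l []
  | (b :: p) => Real.sqrt (mt l p) * (1 - l (b :: p))

/-- The memoized value m at a vertex: `m(v) = m̃(parent v)^(1/2) · l v`. -/
noncomputable def mleaf (l : List Bool → ℝ) : List Bool → ℝ
  | [] => l []
  | (b :: p) => Real.sqrt (mt l p) * l (b :: p)

/-- `m̃(parent v)`, with the convention `m̃(parent root) = 1`. -/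
noncomputable def mparent (l : List Bool → ℝ) : List Bool → ℝ
  | [] => 1
  | (_ :: p) => mt l p

/-- The set of internal trees of the complete binary tree of depth `D`,
i.e. full binary trees of depth at most `D`. -/
def trees : ℕ → Finset FBT
  | 0 => {leaf}
  | (D+1) => insert leaf ((trees D ×ˢ trees D).image (fun p => node p.1 p.2))

/-- Consecutive-leaf pairs of a single tree. -/
def transitions (T : FBT) : Finset (List Bool × List Bool) :=
  (T.leaves.zip T.leaves.tail).toFinset

/-- The set `S(T_C)` of successive leaf transitions of the complete binary
tree of depth `D`. -/
def S (D : ℕ) : Finset (List Bool × List Bool) := (trees D).biUnion transitions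

/-- The left boundary of the complete binary tree of depth `D`. -/
def Bl (D : ℕ) : Finset (List Bool) :=
  (Finset.range (D+1)).image (fun k => List.replicate k false)

/-- The right boundary of the complete binary tree of depth `D`. -/
def Br (D : ℕ) : Finset (List Bool) :=
  (Finset.range (D+1)).image (fun k => List.replicate k true)

/-- The marginalisation dynamic-programming table (indexed from `n = 1`). -/
def M (S : Finset (List Bool × List Bool)) (Bl : Finset (List Bool))
    (w : ℕ → List Bool → ℝ) (mw : List Bool → ℝ) : ℕ → List Bool → ℝ
  | 0, _ => 0
  | 1, v => if v ∈ Bl then w 1 v * mw v else 0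
  | (n+2), v => w (n+2) v * mw v *
      ∑ p ∈ S.filter (fun p => p.2 = v), M S Bl w mw (n+1) p.1

/-- The Viterbi-style max-product dynamic-programming table. -/
def Mstar (S : Finset (List Bool × List Bool)) (Bl : Finset (List Bool))
    (w : ℕ → List Bool → NNReal) (mw : List Bool → NNReal) : ℕ → List Bool → NNReal
  | 0, _ => 0
  | 1, v => if v ∈ Bl then w 1 v * mw v else 0
  | (n+2), v => w (n+2) v * mw v *
      (S.filter (fun p => p.2 = v)).sup (fun p => Mstar S Bl w mw (n+1) p.1)

/-- The complete binary tree of depth `D`, as a full binary tree. -/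
def completeTree : ℕ → FBT
  | 0 => leaf
  | (D+1) => node (completeTree D) (completeTree D)

end FBT

theorem List.mem_zip_tail_of_infix {α : Type*} {a b : α} {l : List α} (h : [a, b] <:+: l) :
    (a, b) ∈ l.zip l.tail := by
  obtain ⟨s, t, rfl⟩ := h
  induction s with
  | nil => simp
  | cons c s ih =>
    obtain ⟨x, xs, hx⟩ := List.exists_cons_of_ne_nil (by simp : s ++ [a, b] ++ t ≠ [])
    rw [hx] at ih
    rw [List.cons_append, List.cons_append, hx]
    exact List.mem_cons_of_mem _ ih

namespace FBT

def rightComb : ℕ → FBT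
  | 0 => leaf
  | n + 1 => node leaf (rightComb n)

def leftComb : ℕ → FBT
  | 0 => leaf
  | n + 1 => node (leftComb n) leaf

/-- `graft q T` places `T` at the reversed position `q`, with a leaf as the sibling of every
vertex on the way. -/
def graft : List Bool → FBT → FBT
  | [], T => T
  | false :: q, T => graft q (node T leaf)
  | true :: q, T => graft q (node leaf T)

theorem depth_rightComb (n : ℕ) : (rightComb n).depth = n := by
  induction n with
  | zero => rfl
  | succ n ih => simp [rightComb, depth, ih]

theorem depth_leftComb (n : ℕ) : (leftComb n).depth = n := by
  induction n with
  | zero => rfl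
  | succ n ih => simp [leftComb, depth, ih]

theorem depth_graft (q : List Bool) (T : FBT) : (graft q T).depth = T.depth + q.length := by
  induction q generalizing T with
  | nil => rfl
  | cons c q ih => cases c <;> simp [graft, ih, depth] <;> omega

theorem exists_leaves_rightComb (n : ℕ) :
    ∃ u, (rightComb n).leaves = u ++ [List.replicate n true] := by
  induction n with
  | zero => exact ⟨[], rfl⟩
  | succ n ih =>
    obtain ⟨u, hu⟩ := ih
    exact ⟨[false] :: u.map (· ++ [true]), by simp [rightComb, leaves, hu, List.replicate_succ']⟩

theorem exists_leaves_leftComb (n : ℕ) :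
    ∃ v, (leftComb n).leaves = List.replicate n false :: v := by
  induction n with
  | zero => exact ⟨[], rfl⟩
  | succ n ih =>
    obtain ⟨v, hv⟩ := ih
    exact ⟨v.map (· ++ [false]) ++ [[true]], by simp [leftComb, leaves, hv, List.replicate_succ']⟩

theorem infix_leaves_graft (q : List Bool) {T : FBT} {l : List (List Bool)}
    (h : l <:+: T.leaves) : l.map (· ++ q) <:+: (graft q T).leaves := by
  induction q generalizing T l with
  | nil => simpa [graft] using h
  | cons c q ih =>
    have hc : l.map (· ++ [c]) <:+: (graft [c] T).leaves := by
      cases c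
      · exact (h.map _).trans (List.prefix_append _ _).isInfix
      · exact (h.map _).trans (List.suffix_append _ _).isInfix
    cases c <;> simpa [graft, Function.comp_def] using ih hc

theorem mem_trees_of_depth_le {D : ℕ} {T : FBT} (h : T.depth ≤ D) : T ∈ trees D := by
  induction D generalizing T with
  | zero =>
    cases T with
    | leaf => simp [trees]
    | node a b => simp [depth] at h
  | succ D ih =>
    cases T with
    | leaf => simp [trees]
    | node a b =>
      simp only [depth, add_le_add_iff_right, max_le_iff] at h
      exact Finset.mem_insert_of_mem
        (Finset.mem_image.2 ⟨(a, b), Finset.mem_product.2 ⟨ih h.1, ih h.2⟩, rfl⟩)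

theorem mem_S_of_infix_leaves {D : ℕ} {T : FBT} {a b : List Bool} (hT : T.depth ≤ D)
    (h : [a, b] <:+: T.leaves) : (a, b) ∈ S D :=
  Finset.mem_biUnion.2
    ⟨T, mem_trees_of_depth_le hT, List.mem_toFinset.2 (List.mem_zip_tail_of_infix h)⟩

end FBT

/-- for every internal vertex `q` of the depth-`D` complete tree,
every vertex of the right boundary of its left subtree, paired with every
vertex of the left boundary of its right subtree, is a successive leaf
transition. -/
theorem stmt13 (D : ℕ) (q : List Bool) (hq : q.length < D) (j k : ℕ)
    (hj : j ≤ D - q.length - 1) (hk : k ≤ D - q.length - 1) :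
    (List.replicate j true ++ false :: q, List.replicate k false ++ true :: q) ∈ FBT.S D := by
  -- The pair is adjacent in the tree whose vertex at `q` has a right comb of depth `j`
  -- as left subtree and a left comb of depth `k` as right subtree.
  set V := FBT.node (FBT.rightComb j) (FBT.leftComb k)
  have hV : [List.replicate j true ++ [false], List.replicate k false ++ [true]] <:+: V.leaves := by
    obtain ⟨u, hu⟩ := FBT.exists_leaves_rightComb j
    obtain ⟨v, hv⟩ := FBT.exists_leaves_leftComb k
    exact ⟨u.map (· ++ [false]), v.map (· ++ [true]), by simp [V, FBT.leaves, hu, hv]⟩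
  refine FBT.mem_S_of_infix_leaves (T := FBT.graft q V) ?_
    (by simpa using FBT.infix_leaves_graft q hV)
  simp only [FBT.depth_graft, V, FBT.depth, FBT.depth_rightComb, FBT.depth_leftComb]
  omega
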